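/- arXiv:1605.07676 — 7 statements merged into one kernel-verified Lean document; each statement's English description precedes it below -/
import Mathlib

section
/- There exists a unique sequence (F_n)_{n∈ℕ} of polynomials with integer coefficients in the indeterminates X_0, X_1, X_2, … such that for every natural number n, fant_n(F_0,…,F_n) = fant_{n+1}(X_0,…,X_{n+1}); moreover each F_n lies in ℤ[X_0,…,X_{n+1}]. -/
open MvPolynomial

private lemma frobAux_supported (p : ℕ) (n : ℕ) :
    WittVector.frobeniusPolyAux p n ∈
      supported ℤ (↑(Finset.range (n + 2)) : Set ℕ) := by
  induction n using Nat.strong_induction_on with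
  | _ n ih =>
    rw [WittVector.frobeniusPolyAux_eq]
    refine sub_mem ?_ (Subalgebra.sum_mem _ fun i hi => Subalgebra.sum_mem _ fun j _ => ?_)
    · exact X_mem_supported.2 (by simp)
    · have hin : i < n := Finset.mem_range.1 hi
      exact mul_mem (mul_mem (pow_mem (pow_mem (X_mem_supported.2 (by simp; omega)) _) _)
        (pow_mem (supported_mono (by intro x hx; simp at hx ⊢; omega) (ih i hin)) _))
        (Subalgebra.algebraMap_mem _ _)

private lemma frob_unique (p : ℕ) [Fact p.Prime]
    (F : ℕ → MvPolynomial ℕ ℤ)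
    (hF : ∀ n : ℕ, bind₁ F (wittPolynomial p ℤ n) = wittPolynomial p ℤ (n + 1)) :
    F = WittVector.frobeniusPoly p := by
  have hinj : Function.Injective (MvPolynomial.map (Int.castRingHom ℚ) : MvPolynomial ℕ ℤ → MvPolynomial ℕ ℚ) :=
    MvPolynomial.map_injective _ Int.cast_injective
  funext n
  apply hinj
  set F' : ℕ → MvPolynomial ℕ ℚ := fun i => MvPolynomial.map (Int.castRingHom ℚ) (F i)
  set G' : ℕ → MvPolynomial ℕ ℚ := fun i => MvPolynomial.map (Int.castRingHom ℚ) (WittVector.frobeniusPoly p i)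
  have key : ∀ (H : ℕ → MvPolynomial ℕ ℚ),
      (∀ m, bind₁ H (wittPolynomial p ℚ m) = wittPolynomial p ℚ (m + 1)) →
      H n = bind₁ (fun i => wittPolynomial p ℚ (i + 1)) (xInTermsOfW p ℚ n) := by
    intro H hH
    conv_lhs => rw [← bind₁_X_right H n, ← bind₁_wittPolynomial_xInTermsOfW p ℚ n]
    rw [bind₁_bind₁]
    simp only [hH]
  have hF' : ∀ m, bind₁ F' (wittPolynomial p ℚ m) = wittPolynomial p ℚ (m + 1) := by
    intro m
    have := congrArg (MvPolynomial.map (Int.castRingHom ℚ)) (hF m)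
    simpa [map_bind₁, map_wittPolynomial] using this
  have hG' : ∀ m, bind₁ G' (wittPolynomial p ℚ m) = wittPolynomial p ℚ (m + 1) := by
    intro m
    have := congrArg (MvPolynomial.map (Int.castRingHom ℚ)) (WittVector.bind₁_frobeniusPoly_wittPolynomial p m)
    rw [map_bind₁, map_wittPolynomial, map_wittPolynomial] at this
    exact this
  rw [show MvPolynomial.map (Int.castRingHom ℚ) (F n) = F' n from rfl,
    show MvPolynomial.map (Int.castRingHom ℚ) (WittVector.frobeniusPoly p n) = G' n from rfl,
    key F' hF', key G' hG']

/-- There exists a unique sequence `(Fₙ)` of integer polynomials in the indeterminates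
`X₀, X₁, …` such that `fantₙ(F₀, …, Fₙ) = fant_{n+1}(X₀, …, X_{n+1})` for every `n`
(where `fantₙ` is the `n`-th Witt polynomial); moreover each `Fₙ` only involves the
variables `X₀, …, X_{n+1}`. -/
theorem frobenius_polynomials_exist_unique (p : ℕ) (hp : p.Prime) :
    (∃! F : ℕ → MvPolynomial ℕ ℤ,
      ∀ n : ℕ, bind₁ F (wittPolynomial p ℤ n) = wittPolynomial p ℤ (n + 1)) ∧
    (∀ F : ℕ → MvPolynomial ℕ ℤ,
      (∀ n : ℕ, bind₁ F (wittPolynomial p ℤ n) = wittPolynomial p ℤ (n + 1)) →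
      ∀ n : ℕ, (F n).vars ⊆ Finset.range (n + 2)) := by
  haveI : Fact p.Prime := ⟨hp⟩
  constructor
  · exact ⟨WittVector.frobeniusPoly p,
      fun n => WittVector.bind₁_frobeniusPoly_wittPolynomial p n,
      fun F hF => frob_unique p F hF⟩
  · intro F hF n
    rw [frob_unique p F hF]
    have : WittVector.frobeniusPoly p n ∈ supported ℤ (↑(Finset.range (n + 2)) : Set ℕ) := by
      rw [WittVector.frobeniusPoly]
      exact add_mem (pow_mem (X_mem_supported.2 (by simp)) _)
        (mul_mem (Subalgebra.algebraMap_mem' _ _) (frobAux_supported p n))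
    exact_mod_cast mem_supported.1 this
end

section
/- The Frobenius polynomials F_n defining the Witt vector Frobenius satisfy F_n ≡ X_n^p (mod p) in ℤ[X_0, X_1, …] for every natural number n. -/
open MvPolynomial

/-- The Frobenius polynomials `Fₙ` (characterized by
`fantₙ(F₀,…,Fₙ) = fant_{n+1}(X₀,…,X_{n+1})` for all `n`) satisfy
`Fₙ ≡ Xₙ^p (mod p)` for every `n`. -/
theorem frobenius_polynomials_mod_p (p : ℕ) (hp : p.Prime)
    (F : ℕ → MvPolynomial ℕ ℤ)
    (hF : ∀ n : ℕ, bind₁ F (wittPolynomial p ℤ n) = wittPolynomial p ℤ (n + 1)) :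
    ∀ n : ℕ, MvPolynomial.map (Int.castRingHom (ZMod p)) (F n) = (X n : MvPolynomial ℕ (ZMod p)) ^ p := by
  haveI : Fact p.Prime := ⟨hp⟩
  have hFeq : F = WittVector.frobeniusPoly p := by
    have := WittVector.poly_eq_of_wittPolynomial_bind_eq p F (WittVector.frobeniusPoly p)
      (fun n => by rw [hF n, WittVector.bind₁_frobeniusPoly_wittPolynomial])
    exact this
  intro n
  rw [hFeq, WittVector.frobeniusPoly_zmod]
end

section
/- Let I be an ideal of a commutative ring A. If a Witt vector a lies in W(I), then every ghost component fant_n(a) lies in I. Conversely, if I satisfies: for all x ∈ A, p·x ∈ I implies x ∈ I, then any Witt vector whose ghost components all lie in I belongs to W(I). -/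
open Finset

private lemma peel_p {A : Type*} [CommRing A] (p : ℕ) (I : Ideal A)
    (hp : ∀ a : A, (p : A) * a ∈ I → a ∈ I) :
    ∀ k (a : A), (p : A) ^ k * a ∈ I → a ∈ I := by
  intro k
  induction k with
  | zero => simp only [pow_zero, one_mul]; exact fun a h => h
  | succ k ih =>
    intro a h
    apply hp
    apply ih
    rw [← mul_assoc, ← pow_succ]
    exact h

/-- Let `I` be an ideal of a commutative ring `A`.  If a Witt vector `x` has all its
components in `I`, then all its ghost components lie in `I`.  Conversely, if
`p·a ∈ I → a ∈ I` for all `a ∈ A`, then a Witt vector whose ghost components all lie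
in `I` has all its components in `I`. -/
theorem wittVector_coeff_mem_iff_ghost_mem (p : ℕ) [Fact p.Prime] (A : Type*) [CommRing A]
    (I : Ideal A) (x : WittVector p A) :
    ((∀ n : ℕ, x.coeff n ∈ I) → ∀ n : ℕ, WittVector.ghostComponent n x ∈ I) ∧
    ((∀ a : A, (p : A) * a ∈ I → a ∈ I) →
      (∀ n : ℕ, WittVector.ghostComponent n x ∈ I) → ∀ n : ℕ, x.coeff n ∈ I) := by
  constructor
  · intro h n
    rw [WittVector.ghostComponent_apply, aeval_wittPolynomial]
    refine Ideal.sum_mem _ fun i _ => Ideal.mul_mem_left _ _ ?_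
    exact Ideal.pow_mem_of_mem _ (h i) _ (pow_pos (Fact.out (p := p.Prime)).pos _)
  · intro hp hg n
    induction n using Nat.strong_induction_on with
    | _ n ih =>
      have h := hg n
      rw [WittVector.ghostComponent_apply, aeval_wittPolynomial,
        Finset.sum_range_succ, Nat.sub_self, pow_zero, pow_one] at h
      have hsum : ∑ i ∈ Finset.range n, (p : A) ^ i * x.coeff i ^ p ^ (n - i) ∈ I := by
        refine Ideal.sum_mem _ fun i hi => Ideal.mul_mem_left _ _ ?_
        exact Ideal.pow_mem_of_mem _ (ih i (Finset.mem_range.mp hi)) _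
          (pow_pos (Fact.out (p := p.Prime)).pos _)
      have hpn : (p : A) ^ n * x.coeff n ∈ I := (Ideal.add_mem_iff_right I hsum).mp h
      exact peel_p p I hp n _ hpn
end

section
/- If a commutative ring A is separated and complete for the I-adic topology defined by an ideal I, then the Witt vector ring W(A) is separated and complete for the topology defined by the filtration (W(I^h))_{h∈ℕ}. -/
lemma wittVector_sub_coeff_mem_iff (p : ℕ) [Fact p.Prime] {A : Type*} [CommRing A]
    (K : Ideal A) (x y : WittVector p A) :
    (∀ m, (x - y).coeff m ∈ K) ↔ ∀ m, x.coeff m - y.coeff m ∈ K := by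
  have H : ∀ z : WittVector p A,
      (∀ m, z.coeff m ∈ K) ↔ WittVector.map (Ideal.Quotient.mk K) z = 0 := by
    intro z
    constructor
    · intro h
      ext m
      rw [WittVector.map_coeff, WittVector.zero_coeff]
      exact Ideal.Quotient.eq_zero_iff_mem.mpr (h m)
    · intro h m
      have := congrArg (fun w : WittVector p (A ⧸ K) => w.coeff m) h
      simp only [WittVector.map_coeff, WittVector.zero_coeff] at this
      exact Ideal.Quotient.eq_zero_iff_mem.mp this
  rw [H]
  rw [map_sub, sub_eq_zero]
  constructor
  · intro h m
    have := congrArg (fun w : WittVector p (A ⧸ K) => w.coeff m) h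
    simp only [WittVector.map_coeff] at this
    exact Ideal.Quotient.eq.mp this
  · intro h
    ext m
    rw [WittVector.map_coeff, WittVector.map_coeff]
    exact Ideal.Quotient.eq.mpr (h m)

/-- If a commutative ring `A` is separated and complete for the `I`-adic topology,
then the Witt vector ring `W(A)` is separated and complete for the topology defined by
the filtration `(W(I^h))ₕ`, where `W(I^h)` consists of the Witt vectors all of whose
components lie in `I^h`. -/
theorem wittVector_separated_and_complete (p : ℕ) [Fact p.Prime] (A : Type*) [CommRing A]
    (I : Ideal A)
    (hsep : ∀ x : A, (∀ n : ℕ, x ∈ I ^ n) → x = 0)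
    (hcomp : ∀ u : ℕ → A,
      (∀ h : ℕ, ∃ N : ℕ, ∀ r s : ℕ, N ≤ r → N ≤ s → u r - u s ∈ I ^ h) →
      ∃ b : A, ∀ h : ℕ, ∃ N : ℕ, ∀ k : ℕ, N ≤ k → b - u k ∈ I ^ h) :
    (∀ x : WittVector p A, (∀ h : ℕ, ∀ m : ℕ, x.coeff m ∈ I ^ h) → x = 0) ∧
    (∀ u : ℕ → WittVector p A,
      (∀ h : ℕ, ∃ N : ℕ, ∀ r s : ℕ, N ≤ r → N ≤ s → ∀ m : ℕ, (u r - u s).coeff m ∈ I ^ h) →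
      ∃ b : WittVector p A, ∀ h : ℕ, ∃ N : ℕ, ∀ k : ℕ, N ≤ k →
        ∀ m : ℕ, (b - u k).coeff m ∈ I ^ h) := by
  constructor
  · intro x hx
    ext m
    rw [WittVector.zero_coeff]
    exact hsep _ (fun n => hx n m)
  · intro u hu
    -- coefficientwise Cauchy
    have cauchy : ∀ m : ℕ, ∀ h : ℕ, ∃ N : ℕ, ∀ r s : ℕ, N ≤ r → N ≤ s →
        (u r).coeff m - (u s).coeff m ∈ I ^ h := by
      intro m h
      obtain ⟨N, hN⟩ := hu h
      exact ⟨N, fun r s hr hs =>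
        (wittVector_sub_coeff_mem_iff p (I ^ h) (u r) (u s)).mp (hN r s hr hs) m⟩
    choose b hb using fun m => hcomp (fun k => (u k).coeff m) (cauchy m)
    refine ⟨WittVector.mk p b, fun h => ?_⟩
    obtain ⟨N, hN⟩ := hu h
    refine ⟨N, fun k hk => ?_⟩
    rw [wittVector_sub_coeff_mem_iff]
    intro m
    obtain ⟨Nm, hNm⟩ := hb m h
    set r := max N Nm with hr
    have h1 : b m - (u r).coeff m ∈ I ^ h := hNm r (le_max_right _ _)
    have h2 : (u r).coeff m - (u k).coeff m ∈ I ^ h :=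
      (wittVector_sub_coeff_mem_iff p (I ^ h) (u r) (u k)).mp
        (hN r k (le_max_left _ _) hk) m
    have : (WittVector.mk p b).coeff m - (u k).coeff m
        = (b m - (u r).coeff m) + ((u r).coeff m - (u k).coeff m) := by
      simp [WittVector.coeff_mk]
    rw [this]
    exact Ideal.add_mem _ h1 h2
end

section
/- Let F(T) = pT + T^p + pT²G(T) with G ∈ ℤ_p[[T]] be a Lubin–Tate series for p. Then there exists a unique Witt vector w over ℤ_p[[T]], all of whose components lie in the ideal T·ℤ_p[[T]], whose n-th ghost component equals the n-fold composition F^{∘n}(T) for every n ∈ ℕ (with F^{∘0}(T) = T). -/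
/-!
Dwork's lemma: if `φ` is a ring endomorphism of `A` with `φ a ≡ a ^ p [mod p]`, any sequence with
`x (n + 1) ≡ φ (x n) [mod p ^ (n + 1)]` is the ghost sequence of a Witt vector, whose components
are obtained one at a time by dividing by `p ^ n`. On `ℤ_p⟦T⟧` take `φ f = f(T ^ p)`. For
`x n = F^{∘n}(T)` the congruence follows by induction from `F ≡ T ^ p [mod p]`: with
`u = x (n + 1)` and `v = φ (x n)` one has `x (n + 2) - φ (x (n + 1)) = F(u) - F(v)`, and
`u ≡ v [mod p ^ (n + 1)]` gives `F(u) ≡ F(v) [mod p ^ (n + 2)]`. Since `p` is a non-zero-divisor,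
ghost components determine Witt vectors, which gives uniqueness and, after reducing to constant
coefficients, that all components vanish at `T = 0`.
-/

open PowerSeries

/-- Formal composition `f ∘ g` of power series (valid when `g` has zero constant term):
the `k`-th coefficient is that of `∑_{j ≤ k} f_j g^j`. -/
noncomputable def psComp {R : Type*} [CommRing R] (f g : PowerSeries R) : PowerSeries R :=
  PowerSeries.mk fun k =>
    PowerSeries.coeff k (∑ j ∈ Finset.range (k + 1), PowerSeries.C (PowerSeries.coeff j f) * g ^ j)

theorem pow_succ_dvd_pow_sub_pow_of_dvd_sub {A : Type*} [CommRing A] {p k : ℕ} {u v : A}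
    (h : (p : A) ^ (k + 1) ∣ u - v) : (p : A) ^ (k + 2) ∣ u ^ p - v ^ p := by
  rw [← geom_sum₂_mul, pow_succ']
  exact mul_dvd_mul (dvd_geom_sum₂_self ((dvd_pow_self _ k.succ_ne_zero).trans h)) h

namespace PowerSeries

variable {R S : Type*} [CommRing R] [CommRing S]

theorem coeff_pow_eq_zero_of_lt {g : R⟦X⟧} (hg : constantCoeff g = 0) {k j : ℕ} (h : k < j) :
    coeff k (g ^ j) = 0 :=
  X_pow_dvd_iff.1 (pow_dvd_pow_of_dvd (X_dvd_iff.2 hg) j) k h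

theorem psComp_eq_subst (f : R⟦X⟧) {g : R⟦X⟧} (hg : constantCoeff g = 0) :
    psComp f g = f.subst g := by
  ext k
  rw [coeff_subst' (HasSubst.of_constantCoeff_zero' hg), finsum_eq_sum_of_support_subset
    (s := Finset.range (k + 1)) _ fun j hj => ?_]
  · simp [psComp, map_sum, coeff_C_mul]
  · by_contra hjk
    simp only [Finset.coe_range, Set.mem_Iio, not_lt] at hjk
    exact hj (by simp only [coeff_pow_eq_zero_of_lt hg hjk, smul_zero])

theorem C_dvd_iff_forall_dvd_coeff {c : R} {f : R⟦X⟧} : C c ∣ f ↔ ∀ n, c ∣ coeff n f := by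
  refine ⟨fun ⟨g, hg⟩ n => ⟨coeff n g, by rw [hg, coeff_C_mul]⟩, fun h => ?_⟩
  choose g hg using h
  exact ⟨mk g, by ext n; rw [coeff_C_mul, coeff_mk, hg]⟩

theorem map_eq_zero_iff_C_dvd {π : R →+* S} {c : R} (hπ : RingHom.ker π = Ideal.span {c})
    {f : R⟦X⟧} : map π f = 0 ↔ C c ∣ f := by
  rw [C_dvd_iff_forall_dvd_coeff, PowerSeries.ext_iff]
  simp only [coeff_map, map_zero, ← Ideal.mem_span_singleton, ← hπ, RingHom.mem_ker]

theorem C_dvd_subst_sub_subst (f : R⟦X⟧) {c : R} {u v : R⟦X⟧} (hu : constantCoeff u = 0)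
    (hv : constantCoeff v = 0) (h : C c ∣ u - v) : C c ∣ f.subst u - f.subst v := by
  have hπ := Ideal.mk_ker (I := Ideal.span {c})
  rw [← map_eq_zero_iff_C_dvd hπ, map_sub, sub_eq_zero] at h ⊢
  have map_subst' (w : R⟦X⟧) (hw : constantCoeff w = 0) :
      map (Ideal.Quotient.mk (Ideal.span {c})) (f.subst w) = (map _ f).subst (map _ w) :=
    map_subst (HasSubst.of_constantCoeff_zero' hw) f
  rw [map_subst' u hu, map_subst' v hv, h]

theorem zmod_expand_eq_pow {p : ℕ} [hp : Fact p.Prime] (f : (ZMod p)⟦X⟧) :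
    expand p hp.out.ne_zero f = f ^ p := by
  ext n
  have hn : n < n + 1 := n.lt_succ_self
  rw [coeff_expand, ← coeff_coe_trunc_of_lt hn (f := f ^ p), ← trunc_trunc_pow,
    coeff_coe_trunc_of_lt hn, ← Polynomial.coe_pow, Polynomial.coeff_coe, ← ZMod.expand_card,
    Polynomial.coeff_expand hp.out.pos, coeff_trunc,
    if_pos (Nat.lt_succ_of_le (Nat.div_le_self n p))]

theorem natCast_dvd_expand_sub_pow {p : ℕ} [hp : Fact p.Prime] (f : ℤ_[p]⟦X⟧) :
    (p : ℤ_[p]⟦X⟧) ∣ expand p hp.out.ne_zero f - f ^ p := by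
  have hker : RingHom.ker (PadicInt.toZMod (p := p)) = Ideal.span {(p : ℤ_[p])} := by
    rw [PadicInt.ker_toZMod, PadicInt.maximalIdeal_eq_span_p]
  rw [← map_natCast C, ← map_eq_zero_iff_C_dvd hker, map_sub, map_pow, map_expand,
    zmod_expand_eq_pow, sub_self]

variable {p : ℕ}

theorem pow_succ_dvd_subst_sub_subst {F : R⟦X⟧} (hF : (p : R⟦X⟧) ∣ F - X ^ p) {u v : R⟦X⟧}
    (hu : constantCoeff u = 0) (hv : constantCoeff v = 0) {k : ℕ}
    (h : (p : R⟦X⟧) ^ (k + 1) ∣ u - v) :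
    (p : R⟦X⟧) ^ (k + 2) ∣ (F.subst u : R⟦X⟧) - F.subst v := by
  obtain ⟨H, hH⟩ := hF
  have subst_F (w : R⟦X⟧) (hw : constantCoeff w = 0) :
      (F.subst w : R⟦X⟧) = w ^ p + p * H.subst w := by
    rw [← coe_substAlgHom (HasSubst.of_constantCoeff_zero' hw), eq_add_of_sub_eq' hH, map_add,
      map_pow, map_mul, map_natCast, substAlgHom_X]
  have hC : (p : R⟦X⟧) ^ (k + 1) = C ((p : R) ^ (k + 1)) := by rw [map_pow, map_natCast]
  have hH : (p : R⟦X⟧) ^ (k + 1) ∣ (H.subst u : R⟦X⟧) - H.subst v := by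
    rw [hC] at h ⊢
    exact C_dvd_subst_sub_subst H hu hv h
  rw [subst_F u hu, subst_F v hv, add_sub_add_comm, ← mul_sub]
  refine dvd_add (pow_succ_dvd_pow_sub_pow_of_dvd_sub h) ?_
  rw [pow_succ']
  exact mul_dvd_mul_left _ hH

theorem constantCoeff_iterate_subst {F : R⟦X⟧} (hF : constantCoeff F = 0) (n : ℕ) :
    constantCoeff ((fun g : R⟦X⟧ => (g.subst F : R⟦X⟧))^[n] X) = 0 := by
  induction n with
  | zero => exact constantCoeff_X
  | succ n ih =>
    rw [Function.iterate_succ_apply']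
    exact constantCoeff_subst_eq_zero hF _ ih

theorem iterate_subst_succ {F : R⟦X⟧} (hF : constantCoeff F = 0) (n : ℕ) :
    (fun g : R⟦X⟧ => (g.subst F : R⟦X⟧))^[n + 1] X
      = F.subst ((fun g : R⟦X⟧ => (g.subst F : R⟦X⟧))^[n] X) := by
  induction n with
  | zero => exact (subst_X (HasSubst.of_constantCoeff_zero' hF)).trans (X_subst F).symm
  | succ n ih =>
    have h := (Function.iterate_succ_apply' _ n X).symm.trans ih
    rw [Function.iterate_succ_apply', ih, subst_comp_subst_apply
      (HasSubst.of_constantCoeff_zero' (constantCoeff_iterate_subst hF n))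
      (HasSubst.of_constantCoeff_zero' hF), h]

theorem pow_succ_dvd_iterate_subst_sub_expand (hp : p ≠ 0) {F : R⟦X⟧}
    (hF0 : constantCoeff F = 0) (hF : (p : R⟦X⟧) ∣ F - X ^ p) (n : ℕ) :
    (p : R⟦X⟧) ^ (n + 1) ∣ (fun g : R⟦X⟧ => (g.subst F : R⟦X⟧))^[n + 1] X
      - expand p hp ((fun g : R⟦X⟧ => (g.subst F : R⟦X⟧))^[n] X) := by
  induction n with
  | zero => simpa [subst_X (HasSubst.of_constantCoeff_zero' hF0), expand_X] using hF
  | succ n ih =>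
    have hexp : expand p hp ((fun g : R⟦X⟧ => (g.subst F : R⟦X⟧))^[n + 1] X)
        = F.subst (expand p hp ((fun g : R⟦X⟧ => (g.subst F : R⟦X⟧))^[n] X)) := by
      rw [iterate_subst_succ hF0, expand_apply, expand_apply, subst_comp_subst_apply
        (HasSubst.of_constantCoeff_zero' (constantCoeff_iterate_subst hF0 n))
        (HasSubst.of_constantCoeff_zero' (by simp [hp]))]
    rw [iterate_subst_succ hF0 (n + 1), hexp]
    exact pow_succ_dvd_subst_sub_subst hF (constantCoeff_iterate_subst hF0 _)
      (by rw [constantCoeff_expand, constantCoeff_iterate_subst hF0]) ih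

end PowerSeries

namespace WittVector

open Finset

variable {p : ℕ} [Fact p.Prime] {A B : Type*} [CommRing A] [CommRing B]

theorem ghostComponent_eq_sum (w : WittVector p A) (n : ℕ) :
    ghostComponent n w = ∑ i ∈ range (n + 1), (p : A) ^ i * w.coeff i ^ p ^ (n - i) := by
  rw [ghostComponent_apply, aeval_wittPolynomial]

theorem ghostComponent_map (f : A →+* B) (w : WittVector p A) (n : ℕ) :
    ghostComponent n (map f w) = f (ghostComponent n w) := by
  simp [ghostComponent_eq_sum, map_sum]

theorem ext_ghostComponent (hA : IsLeftRegular (p : A)) {v w : WittVector p A}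
    (h : ∀ n, ghostComponent n v = ghostComponent n w) : v = w := by
  ext n
  induction n using Nat.strong_induction_on with
  | _ n ih =>
    have hlow : ∑ i ∈ range n, (p : A) ^ i * v.coeff i ^ p ^ (n - i)
        = ∑ i ∈ range n, (p : A) ^ i * w.coeff i ^ p ^ (n - i) :=
      sum_congr rfl fun i hi => by rw [ih i (mem_range.1 hi)]
    have hn := h n
    rw [ghostComponent_eq_sum, ghostComponent_eq_sum, sum_range_succ, sum_range_succ, hlow,
      add_right_inj, Nat.sub_self, pow_zero, pow_one, pow_one] at hn
    exact hA.pow n hn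

theorem map_coeff_eq_zero_of_map_ghostComponent_eq_zero (hB : IsLeftRegular (p : B))
    (f : A →+* B) {w : WittVector p A} (h : ∀ n, f (ghostComponent n w) = 0) (n : ℕ) :
    f (w.coeff n) = 0 :=
  (map_eq_zero_iff f).1 (ext_ghostComponent hB fun n => by rw [ghostComponent_map, h, map_zero]) n

theorem pow_succ_dvd_map_ghostComponent_sub {φ : A →+* A} (hφ : ∀ a, (p : A) ∣ φ a - a ^ p)
    (w : WittVector p A) (n : ℕ) :
    (p : A) ^ (n + 1) ∣
      φ (ghostComponent n w) - ∑ i ∈ range (n + 1), (p : A) ^ i * w.coeff i ^ p ^ (n + 1 - i) := by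
  rw [ghostComponent_eq_sum, map_sum, ← sum_sub_distrib]
  refine dvd_sum fun i hi => ?_
  have hi : i ≤ n := Nat.lt_succ_iff.1 (mem_range.1 hi)
  have key := dvd_sub_pow_of_dvd_sub (hφ (w.coeff i)) (n - i)
  rw [← pow_mul, ← pow_succ'] at key
  rw [map_mul, map_pow, map_pow, map_natCast, ← mul_sub, show n + 1 - i = n - i + 1 by omega,
    show n + 1 = i + (n - i + 1) by omega, pow_add]
  exact mul_dvd_mul_left _ key

variable (p) in
/-- The `n`-th Witt coefficient solving the ghost equations `ghostComponent n w = x n`, namely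
`(x n - ∑_{i<n} p^i a_i^{p^(n-i)}) / p^n`, whenever this division is possible. -/
noncomputable def dworkCoeff (x : ℕ → A) (n : ℕ) : A :=
  Classical.epsilon fun a : A =>
    ∑ i : Fin n, (p : A) ^ (i : ℕ) * dworkCoeff x i ^ p ^ (n - i) + (p : A) ^ n * a = x n
termination_by n
decreasing_by exact i.isLt

theorem ghostComponent_mk_dworkCoeff (x : ℕ → A) {n : ℕ}
    (h : (p : A) ^ n ∣ x n - ∑ i ∈ range n, (p : A) ^ i * dworkCoeff p x i ^ p ^ (n - i)) :
    ghostComponent n (mk p (dworkCoeff p x)) = x n := by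
  obtain ⟨a, ha⟩ := h
  have hspec := Classical.epsilon_spec (p := fun a : A =>
    ∑ i : Fin n, (p : A) ^ (i : ℕ) * dworkCoeff p x i ^ p ^ (n - i) + (p : A) ^ n * a = x n)
    ⟨a, by rw [Fin.sum_univ_eq_sum_range (fun i => (p : A) ^ i * dworkCoeff p x i ^ p ^ (n - i)),
      ← ha, add_sub_cancel]⟩
  rw [← dworkCoeff, Fin.sum_univ_eq_sum_range
    (fun i => (p : A) ^ i * dworkCoeff p x i ^ p ^ (n - i))] at hspec
  rw [ghostComponent_eq_sum, coeff_mk, sum_range_succ, Nat.sub_self, pow_zero, pow_one, hspec]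

theorem exists_ghostComponent_eq {φ : A →+* A} (hφ : ∀ a, (p : A) ∣ φ a - a ^ p) (x : ℕ → A)
    (hx : ∀ n, (p : A) ^ (n + 1) ∣ x (n + 1) - φ (x n)) :
    ∃ w : WittVector p A, ∀ n, ghostComponent n w = x n := by
  refine ⟨mk p (dworkCoeff p x), fun n => ?_⟩
  induction n using Nat.strong_induction_on with
  | _ n ih =>
    refine ghostComponent_mk_dworkCoeff x ?_
    cases n with
    | zero => rw [pow_zero]; exact one_dvd _
    | succ n =>
      have hφx := pow_succ_dvd_map_ghostComponent_sub hφ (mk p (dworkCoeff p x)) n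
      rw [ih n n.lt_succ_self, coeff_mk] at hφx
      rw [← sub_add_sub_cancel _ (φ (x n))]
      exact dvd_add (hx n) hφx

end WittVector

/-- Let `F(T) = pT + T^p + pT²G(T)` be a Lubin–Tate series for `p` over `ℤ_p`.  Then
there exists a unique Witt vector `w` over `ℤ_p[[T]]`, all of whose components lie
in the ideal `(T)`, whose `n`-th ghost component equals the `n`-fold composition
`F^{∘n}(T)` for every `n`. -/
theorem lubinTate_wittVector_exists_unique (p : ℕ) [Fact p.Prime]
    (G : PowerSeries ℤ_[p])
    (F : PowerSeries ℤ_[p])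
    (hF : F = PowerSeries.C (p : ℤ_[p]) * PowerSeries.X + PowerSeries.X ^ p +
      PowerSeries.C (p : ℤ_[p]) * PowerSeries.X ^ 2 * G) :
    ∃! w : WittVector p (PowerSeries ℤ_[p]),
      (∀ n : ℕ, w.coeff n ∈ Ideal.span ({PowerSeries.X} : Set (PowerSeries ℤ_[p]))) ∧
      (∀ n : ℕ, WittVector.ghostComponent n w =
        (fun g => psComp g F)^[n] PowerSeries.X) := by
  have hp : p ≠ 0 := (Fact.out : p.Prime).ne_zero
  have hF0 : constantCoeff F = 0 := by simp [hF, hp]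
  have hFp : (p : ℤ_[p]⟦X⟧) ∣ F - X ^ p := ⟨X + X ^ 2 * G, by rw [hF, map_natCast]; ring⟩
  have hcomp : (fun g => psComp g F) = fun g => (g.subst F : ℤ_[p]⟦X⟧) :=
    funext fun g => psComp_eq_subst g hF0
  have hpZp : IsLeftRegular (p : ℤ_[p]) :=
    IsLeftCancelMulZero.mul_left_cancel_of_ne_zero (Nat.cast_ne_zero.2 hp)
  have hpA : IsLeftRegular (p : ℤ_[p]⟦X⟧) :=
    IsLeftCancelMulZero.mul_left_cancel_of_ne_zero fun h => hpZp.ne_zero <| by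
      simpa using congrArg constantCoeff h
  obtain ⟨w, hw⟩ := WittVector.exists_ghostComponent_eq (p := p) (φ := (expand p hp).toRingHom)
    natCast_dvd_expand_sub_pow (fun n => (fun g => (g.subst F : ℤ_[p]⟦X⟧))^[n] X)
    (pow_succ_dvd_iterate_subst_sub_expand hp hF0 hFp)
  rw [hcomp]
  refine ⟨w, ⟨fun n => ?_, hw⟩, fun v ⟨_, hv⟩ => WittVector.ext_ghostComponent hpA fun n => ?_⟩
  · rw [Ideal.mem_span_singleton, X_dvd_iff]
    exact WittVector.map_coeff_eq_zero_of_map_ghostComponent_eq_zero hpZp constantCoeff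
      (fun n => by rw [hw, constantCoeff_iterate_subst hF0]) n
  · rw [hv, hw]
end

section
/- Let F(T) be a Lubin–Tate series for p, and let w be the unique Witt vector over ℤ_p[[T]] whose ghost components are (F^{∘n}(T))_{n∈ℕ}. Then all ghost components of the Witt vector w − V(w) − τ(T) lie in the ideal T²·ℤ_p[[T]], and consequently w − V(w) − τ(T) ∈ W(T²ℤ_p[[T]]). -/
/-!
Since `F ≡ pT (mod T²)`, the iterates satisfy `F^{∘n}(T) ≡ pⁿT (mod T²)`, so the ghost components
`F^{∘n}(T) − p·F^{∘(n-1)}(T) − T^{pⁿ}` of `w − V(w) − τ(T)` vanish modulo `T²` (using `pⁿ ≥ 2`).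
As `p` is a non-zero-divisor modulo `T²`, the ghost equations then put each Witt component in `(T²)`
by induction.
-/

open PowerSeries

namespace PowerSeries

variable {R : Type*} [CommRing R]

theorem mem_span_X_sq_iff {f : R⟦X⟧} :
    f ∈ Ideal.span {X ^ 2} ↔ coeff 0 f = 0 ∧ coeff 1 f = 0 := by
  rw [Ideal.mem_span_singleton, X_pow_dvd_iff]
  refine ⟨fun h => ⟨h 0 (by norm_num), h 1 (by norm_num)⟩, ?_⟩
  rintro ⟨h0, h1⟩ m hm
  interval_cases m
  exacts [h0, h1]

theorem X_pow_dvd_of_X_pow_dvd_C_mul [NoZeroDivisors R] {a : R} (ha : a ≠ 0) {k : ℕ}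
    {f : R⟦X⟧} (h : X ^ k ∣ C a * f) : X ^ k ∣ f := by
  rw [X_pow_dvd_iff] at h ⊢
  intro m hm
  simpa [coeff_C_mul, ha] using h m hm

end PowerSeries

section psComp

variable {R : Type*} [CommRing R] (f g : R⟦X⟧)

theorem coeff_zero_psComp : coeff 0 (psComp f g) = coeff 0 f := by
  simp [psComp]

theorem coeff_one_psComp : coeff 1 (psComp f g) = coeff 1 f * coeff 1 g := by
  simp [psComp, Finset.sum_range_succ, coeff_C_mul]

theorem coeff_zero_iterate_psComp (n : ℕ) :
    coeff 0 ((fun h => psComp h g)^[n] f) = coeff 0 f := by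
  induction n with
  | zero => rfl
  | succ n ih => rw [Function.iterate_succ_apply', coeff_zero_psComp, ih]

theorem coeff_one_iterate_psComp (n : ℕ) :
    coeff 1 ((fun h => psComp h g)^[n] f) = coeff 1 f * coeff 1 g ^ n := by
  induction n with
  | zero => simp
  | succ n ih => rw [Function.iterate_succ_apply', coeff_one_psComp, ih, pow_succ, mul_assoc]

end psComp

namespace WittVector

variable {p : ℕ} [Fact p.Prime] {R : Type*} [CommRing R]

theorem ghostComponent_zero_sub_verschiebung_sub_teichmuller (w : WittVector p R) (x : R) :
    ghostComponent 0 (w - verschiebung w - teichmuller p x) = ghostComponent 0 w - x := by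
  simp [ghostComponent_zero_verschiebung, ghostComponent_teichmuller]

theorem ghostComponent_succ_sub_verschiebung_sub_teichmuller (w : WittVector p R) (x : R)
    (n : ℕ) :
    ghostComponent (n + 1) (w - verschiebung w - teichmuller p x) =
      ghostComponent (n + 1) w - p * ghostComponent n w - x ^ p ^ (n + 1) := by
  rw [map_sub, map_sub, ghostComponent_verschiebung, ghostComponent_teichmuller]

/-- Once `x_0, …, x_{n-1}` lie in `I`, the `n`-th ghost component is `p ^ n * x_n` modulo `I`. -/
theorem coeff_mem_of_ghostComponent_mem {I : Ideal R} (hI : ∀ a, (p : R) * a ∈ I → a ∈ I)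
    {x : WittVector p R} (hx : ∀ n, ghostComponent n x ∈ I) (n : ℕ) : x.coeff n ∈ I := by
  have hI_pow : ∀ k a, (p : R) ^ k * a ∈ I → a ∈ I := by
    intro k
    induction k with
    | zero => simp
    | succ k ih => exact fun a ha => ih a (hI _ (by rwa [pow_succ', mul_assoc] at ha))
  induction n using Nat.strong_induction_on with
  | _ n ih =>
    have hghost := hx n
    rw [ghostComponent_apply, aeval_wittPolynomial, Finset.sum_range_succ, Nat.sub_self,
      pow_zero, pow_one] at hghost
    have hlower : ∑ i ∈ Finset.range n, (p : R) ^ i * x.coeff i ^ p ^ (n - i) ∈ I :=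
      I.sum_mem fun i hi => I.mul_mem_left _ <|
        I.pow_mem_of_mem (ih i (Finset.mem_range.mp hi)) _ (pow_pos (Fact.out : p.Prime).pos _)
    exact hI_pow n _ ((I.add_mem_iff_right hlower).mp hghost)

end WittVector

/-- Let `F(T) = pT + T^p + pT²G(T)` be a Lubin–Tate series for `p`, and let `w` be the
Witt vector over `ℤ_p[[T]]` whose ghost components are the compositional iterates
`F^{∘n}(T)`.  Then all the ghost components of `w − V(w) − τ(T)` lie in the ideal
`(T²)`, and consequently all the components of `w − V(w) − τ(T)` lie in `(T²)`. -/
theorem lubinTate_wittVector_sub_verschiebung_sub_teichmuller (p : ℕ) [Fact p.Prime]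
    (G : PowerSeries ℤ_[p]) (F : PowerSeries ℤ_[p])
    (hF : F = PowerSeries.C (p : ℤ_[p]) * PowerSeries.X + PowerSeries.X ^ p +
      PowerSeries.C (p : ℤ_[p]) * PowerSeries.X ^ 2 * G)
    (w : WittVector p (PowerSeries ℤ_[p]))
    (hw : ∀ n : ℕ, WittVector.ghostComponent n w = (fun g => psComp g F)^[n] PowerSeries.X) :
    (∀ n : ℕ, WittVector.ghostComponent n
        (w - WittVector.verschiebung w - WittVector.teichmuller p PowerSeries.X) ∈
        Ideal.span ({PowerSeries.X ^ 2} : Set (PowerSeries ℤ_[p]))) ∧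
    (∀ n : ℕ,
      (w - WittVector.verschiebung w - WittVector.teichmuller p PowerSeries.X).coeff n ∈
        Ideal.span ({PowerSeries.X ^ 2} : Set (PowerSeries ℤ_[p]))) := by
  have hp : p.Prime := Fact.out
  have hF1 : coeff 1 F = p := by
    rw [hF, mul_assoc]
    simp only [map_add, coeff_C_mul, coeff_one_X, coeff_X_pow, coeff_X_pow_mul']
    simp [hp.one_lt.ne]
  have hghost : ∀ n, WittVector.ghostComponent n
      (w - WittVector.verschiebung w - WittVector.teichmuller p X) ∈ Ideal.span {X ^ 2} := by
    rintro (_ | n)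
    · rw [WittVector.ghostComponent_zero_sub_verschiebung_sub_teichmuller, hw,
        Function.iterate_zero_apply, sub_self]
      exact zero_mem _
    · have hpow : 1 < p ^ (n + 1) := Nat.one_lt_pow n.succ_ne_zero hp.one_lt
      rw [WittVector.ghostComponent_succ_sub_verschiebung_sub_teichmuller, hw, hw,
        mem_span_X_sq_iff, ← map_natCast (C (R := ℤ_[p]))]
      simp only [map_sub, coeff_C_mul, coeff_zero_iterate_psComp, coeff_one_iterate_psComp,
        coeff_X_pow, coeff_zero_X, coeff_one_X, hF1, if_neg hpow.ne,
        if_neg (zero_lt_one.trans hpow).ne]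
      constructor <;> ring
  refine ⟨hghost, WittVector.coeff_mem_of_ghostComponent_mem (fun a ha => ?_) hghost⟩
  rw [Ideal.mem_span_singleton, ← map_natCast (C (R := ℤ_[p]))] at ha
  rw [Ideal.mem_span_singleton]
  exact X_pow_dvd_of_X_pow_dvd_C_mul (Nat.cast_ne_zero.mpr hp.ne_zero) ha
end

section
/- For a Witt vector a over a ℤ_(p)-algebra A and an element α ∈ A, the Artin–Hasse exponential satisfies E(τ(α)·a)(x) = E(a)(αx), where τ(α) is the Teichmüller lift of α and E is the Artin–Hasse map. -/
open PowerSeries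

/-- The ring `ℤ_(p) = ℤ_p ∩ ℚ`, realized as a subring of `ℚ`. -/
noncomputable def ZpRat (p : ℕ) [Fact p.Prime] : Subring ℚ :=
  (PadicInt.subring p).comap (Rat.castHom ℚ_[p])

open scoped Classical

/-- The series `∑_{n ≥ 0} x^{pⁿ}/pⁿ` over `ℚ` (its coefficient at `k = pⁿ` is `1/k`). -/
noncomputable def ahLog (p : ℕ) : PowerSeries ℚ :=
  PowerSeries.mk fun k => if ∃ n : ℕ, k = p ^ n then (1 : ℚ) / k else 0

/-- The Artin–Hasse exponential of a Witt vector `a` over a `ℤ_(p)`-algebra `A`: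
`E(a) = ∏_{i ≥ 0} AH(aᵢ x^{pⁱ})`.  (The `k`-th coefficient of the infinite product is
that of the finite product of the factors with `i ≤ k`, the remaining factors being
`≡ 1 mod x^{k+1}`.) -/
noncomputable def artinHasseExp {p : ℕ} [Fact p.Prime] {A : Type*} [CommRing A]
    [Algebra (ZpRat p) A] (AH : PowerSeries (ZpRat p)) (a : WittVector p A) :
    PowerSeries A :=
  PowerSeries.mk fun k => PowerSeries.coeff k
    (∏ i ∈ Finset.range (k + 1),
      psComp (PowerSeries.map (algebraMap (ZpRat p) A) AH)
        (PowerSeries.C (a.coeff i) * PowerSeries.X ^ p ^ i))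

/-!
Multiplying by a Teichmüller lift `τ(α)` multiplies the `n`-th Witt coefficient by `α ^ pⁿ`.
When `p` is invertible this is checked on ghost components, where `τ(α)` has components `α ^ pⁿ`;
in general one passes to the universal case, a polynomial ring over `ℤ`, which embeds into the
corresponding polynomial ring over `ℚ`. Hence the `i`-th factor of `E(τ(α) a)` is
`AH(α^{pⁱ} aᵢ x^{pⁱ}) = AH(aᵢ (αx)^{pⁱ})`, and substituting `αx` for `x` is the ring hom
`rescale α`, so it passes through the product.
-/

namespace WittVector

variable {p : ℕ} [Fact p.Prime]

theorem ghostComponent_mk_pow_mul {R : Type*} [CommRing R] (α : R) (a : WittVector p R)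
    (n : ℕ) :
    ghostComponent n (mk p fun i => α ^ p ^ i * a.coeff i) = α ^ p ^ n * ghostComponent n a := by
  simp only [ghostComponent_apply, aeval_wittPolynomial, Finset.mul_sum, coeff_mk]
  refine Finset.sum_congr rfl fun i hi => ?_
  have hin : i ≤ n := Nat.lt_succ_iff.mp (Finset.mem_range.mp hi)
  rw [mul_pow, ← pow_mul, ← pow_add, Nat.add_sub_cancel' hin, mul_left_comm]

theorem teichmuller_mul_eq_mk_of_invertible {R : Type*} [CommRing R] [Invertible (p : R)]
    (α : R) (a : WittVector p R) :
    teichmuller p α * a = mk p fun i => α ^ p ^ i * a.coeff i := by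
  apply (ghostMap.bijective_of_invertible p R).injective
  funext n
  simp only [ghostMap_apply, map_mul, ghostComponent_mk_pow_mul, ghostComponent_teichmuller]

theorem coeff_teichmuller_mul_of_injective {R S : Type*} [CommRing R] [CommRing S]
    [Invertible (p : S)] (f : R →+* S) (hf : Function.Injective f) (α : R) (a : WittVector p R)
    (n : ℕ) :
    (teichmuller p α * a).coeff n = α ^ p ^ n * a.coeff n := by
  apply hf
  rw [← map_coeff, map_mul, map_teichmuller, teichmuller_mul_eq_mk_of_invertible, coeff_mk,
    map_mul, map_pow, map_coeff]

theorem coeff_teichmuller_mul {R : Type*} [CommRing R] (α : R) (a : WittVector p R) (n : ℕ) :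
    (teichmuller p α * a).coeff n = α ^ p ^ n * a.coeff n := by
  let αᵤ : MvPolynomial (Option ℕ) ℤ := MvPolynomial.X none
  let aᵤ : WittVector p (MvPolynomial (Option ℕ) ℤ) := mk p fun i => MvPolynomial.X (some i)
  let f : MvPolynomial (Option ℕ) ℤ →+* R :=
    MvPolynomial.eval₂Hom (Int.castRingHom R) fun i => i.elim α a.coeff
  have hα : f αᵤ = α := by simp [f, αᵤ]
  have ha : map f aᵤ = a := by ext i; simp [f, aᵤ]
  have universal : (teichmuller p αᵤ * aᵤ).coeff n = αᵤ ^ p ^ n * aᵤ.coeff n :=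
    coeff_teichmuller_mul_of_injective (MvPolynomial.map (Int.castRingHom ℚ))
      (MvPolynomial.map_injective _ Int.cast_injective) αᵤ aᵤ n
  rw [← hα, ← ha, ← map_teichmuller, ← map_mul, map_coeff, map_coeff, universal, map_mul,
    map_pow]

end WittVector

theorem psComp_C_mul_X {R : Type*} [CommRing R] (f : PowerSeries R) (α : R) :
    psComp f (C α * X) = rescale α f := by
  ext k
  simp only [psComp, coeff_mk, coeff_rescale, map_sum, mul_pow, ← map_pow,
    coeff_C_mul, coeff_X_pow]
  rw [Finset.sum_eq_single_of_mem k (Finset.self_mem_range_succ k) fun j _ hj => by simp [hj.symm]]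
  simp [mul_comm]

theorem rescale_psComp_C_mul_X_pow {R : Type*} [CommRing R] (f : PowerSeries R) (c α : R)
    (m : ℕ) :
    rescale α (psComp f (C c * X ^ m)) = psComp f (C (α ^ m * c) * X ^ m) := by
  ext k
  simp only [psComp, coeff_mk, coeff_rescale, map_sum, Finset.mul_sum, mul_pow, ← pow_mul,
    ← map_pow, coeff_C_mul, coeff_X_pow]
  refine Finset.sum_congr rfl fun j _ => ?_
  split_ifs with h
  · subst h
    ring
  · simp

theorem artinHasseExp_teichmuller_smul_general (p : ℕ) [Fact p.Prime] (A : Type*) [CommRing A]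
    [Algebra (ZpRat p) A] (AH : PowerSeries (ZpRat p))
    (a : WittVector p A) (α : A) :
    artinHasseExp AH (WittVector.teichmuller p α * a) =
      psComp (artinHasseExp AH a) (PowerSeries.C α * PowerSeries.X) := by
  rw [psComp_C_mul_X]
  ext k
  rw [coeff_rescale, artinHasseExp, artinHasseExp, coeff_mk, coeff_mk, ← coeff_rescale,
    map_prod (rescale α)]
  simp only [rescale_psComp_C_mul_X_pow, WittVector.coeff_teichmuller_mul]

/-- For a Witt vector `a` over a `ℤ_(p)`-algebra `A` and `α ∈ A`, the Artin–Hasse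
exponential satisfies `E(τ(α)·a)(x) = E(a)(αx)`. -/
theorem artinHasseExp_teichmuller_smul (p : ℕ) [Fact p.Prime] (A : Type*) [CommRing A]
    [Algebra (ZpRat p) A] (AH : PowerSeries (ZpRat p))
    (hAH : PowerSeries.map (ZpRat p).subtype AH = psComp (PowerSeries.exp ℚ) (ahLog p))
    (a : WittVector p A) (α : A) :
    artinHasseExp AH (WittVector.teichmuller p α * a) =
      psComp (artinHasseExp AH a) (PowerSeries.C α * PowerSeries.X) :=
  artinHasseExp_teichmuller_smul_general p A AH a α
end
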